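/- arXiv:1902.02442 — 2 statements merged into one kernel-verified Lean document; each statement's English description precedes it below -/
import Mathlib

section
/- Let M be a complex normed (associative unital) algebra, let τ : M → ℂ be a continuous ℂ-linear functional with τ(xy) = τ(yx) for all x, y ∈ M, let s = (s₁,…,sₙ) and b = (b₁,…,bₙ) be n-tuples in M, and let P ∈ A. Then the map ℂ ∋ ε ↦ τ(ev_{s+εb}(P)) has derivative at ε = 0 equal to Σ_{j=1}^n τ(b_j · ev_s(δ_j P)). -/
noncomputable section

/-- The free algebra `A = ℂ⟨X₁,…,Xₙ⟩` on `n` generators. -/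
abbrev FA (n : ℕ) := FreeAlgebra ℂ (Fin n)

def X {n : ℕ} (i : Fin n) : FA n := FreeAlgebra.ι ℂ i

/-- The monomial `X_{i₁} ⋯ X_{i_m}` associated to a list of indices. -/
def mono {n : ℕ} (l : List (Fin n)) : FA n := (l.map X).prod

/-! Both sides of the formula are ℂ-linear in `P`, so it suffices to treat a monomial
`P = X_{i₁} ⋯ X_{i_m}`. There `ev_{s+εb}(P)` is the product of the `s_{i_k} + ε b_{i_k}`, whose
derivative at `0` is `Σ_k s_{i₁} ⋯ b_{i_k} ⋯ s_{i_m}` by the Leibniz rule; applying `τ` and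
moving the prefix `s_{i₁} ⋯ s_{i_{k-1}}` to the back by traciality turns the `k`-th term into
`τ(b_{i_k} · ev_s(X_{i_{k+1}} ⋯ X_{i_m} X_{i₁} ⋯ X_{i_{k-1}}))`, the `k`-th term of the
cyclic derivative `δ_{i_k} P`. -/

theorem HasDerivAt.list_prod {ι 𝕜 𝔸 : Type*} [NontriviallyNormedField 𝕜] [NormedRing 𝔸]
    [NormedAlgebra 𝕜 𝔸] {f : ι → 𝕜 → 𝔸} {f' : ι → 𝔸} {x : 𝕜} {l : List ι}
    (h : ∀ i ∈ l, HasDerivAt (f i) (f' i) x) :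
    HasDerivAt (fun y ↦ (l.map (f · y)).prod)
      (∑ k : Fin l.length, ((l.take k).map (f · x)).prod * f' (l.get k) *
        ((l.drop (k + 1)).map (f · x)).prod) x := by
  simpa [mul_assoc] using (HasFDerivAt.list_prod' fun i hi ↦ (h i hi).hasFDerivAt).hasDerivAt

lemma mono_append {n : ℕ} (l₁ l₂ : List (Fin n)) : mono (l₁ ++ l₂) = mono l₁ * mono l₂ := by
  simp [mono]

lemma lift_mono {n : ℕ} {M : Type*} [Semiring M] [Algebra ℂ M] (c : Fin n → M)
    (l : List (Fin n)) : FreeAlgebra.lift ℂ c (mono l) = (l.map c).prod := by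
  simp [mono, X, map_list_prod, Function.comp_def]

lemma span_range_mono (n : ℕ) : Submodule.span ℂ (Set.range (mono (n := n))) = ⊤ := by
  rw [eq_top_iff]
  rintro P -
  induction P using FreeAlgebra.induction with
  | grade0 r =>
    rw [Algebra.algebraMap_eq_smul_one]
    exact Submodule.smul_mem _ r (Submodule.subset_span ⟨[], rfl⟩)
  | grade1 i => exact Submodule.subset_span ⟨[i], by simp [mono, X]⟩
  | mul x y hx hy =>
    have hxy := Submodule.mul_mem_mul hx hy
    rw [Submodule.span_mul_span] at hxy
    refine Submodule.span_le.2 ?_ hxy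
    rintro _ ⟨_, ⟨l₁, rfl⟩, _, ⟨l₂, rfl⟩, rfl⟩
    exact Submodule.subset_span ⟨l₁ ++ l₂, mono_append l₁ l₂⟩
  | add _ _ hx hy => exact add_mem hx hy

lemma sum_tracial_mul_lift_cyclicDeriv_mono {n : ℕ} {M F : Type*} [Ring M] [Algebra ℂ M]
    [FunLike F M ℂ] [LinearMapClass F ℂ M ℂ] (τ : F)
    (htr : ∀ x y : M, τ (x * y) = τ (y * x)) (s b : Fin n → M)
    (δ : Fin n → (FA n →ₗ[ℂ] FA n))
    (hδ : ∀ (j : Fin n) (l : List (Fin n)),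
      δ j (mono l) = ∑ k : Fin l.length,
        if l.get k = j then mono (l.drop (k.val + 1)) * mono (l.take k.val) else 0)
    (l : List (Fin n)) :
    ∑ j : Fin n, τ (b j * FreeAlgebra.lift ℂ s (δ j (mono l))) =
      ∑ k : Fin l.length,
        τ (((l.take k).map s).prod * b (l.get k) * ((l.drop (k + 1)).map s).prod) := by
  have hterm : ∀ j, τ (b j * FreeAlgebra.lift ℂ s (δ j (mono l))) = ∑ k : Fin l.length,
      if l.get k = j then
        τ (b (l.get k) * (((l.drop (k + 1)).map s).prod * ((l.take k).map s).prod)) else 0 := by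
    intro j
    simp only [hδ, map_sum, Finset.mul_sum]
    refine Finset.sum_congr rfl fun k _ ↦ ?_
    split_ifs with hk
    · rw [hk, map_mul (FreeAlgebra.lift ℂ s), lift_mono, lift_mono]
    · simp
  simp only [hterm]
  rw [Finset.sum_comm]
  refine Finset.sum_congr rfl fun k _ ↦ ?_
  rw [Finset.sum_ite_eq, if_pos (Finset.mem_univ _), ← mul_assoc, htr, ← mul_assoc]

theorem stmt5_general {n : ℕ}
    (M : Type*) [NormedRing M] [NormedAlgebra ℂ M]
    (τ : M →L[ℂ] ℂ) (htr : ∀ x y : M, τ (x * y) = τ (y * x))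
    (s b : Fin n → M)
    (δ : Fin n → (FA n →ₗ[ℂ] FA n))
    (hδ : ∀ (j : Fin n) (l : List (Fin n)),
      δ j (mono l) = ∑ k : Fin l.length,
        if l.get k = j then mono (l.drop (k.val + 1)) * mono (l.take k.val) else 0)
    (P : FA n) :
    HasDerivAt (fun ε : ℂ => τ (FreeAlgebra.lift ℂ (fun i => s i + ε • b i) P))
      (∑ j : Fin n, τ (b j * FreeAlgebra.lift ℂ s (δ j P))) 0 := by
  have hP : P ∈ Submodule.span ℂ (Set.range mono) := span_range_mono n ▸ Submodule.mem_top
  induction hP using Submodule.span_induction with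
  | mem _ hl =>
    obtain ⟨l, rfl⟩ := hl
    have hline : ∀ i, HasDerivAt (fun ε : ℂ ↦ s i + ε • b i) (b i) 0 := fun i ↦ by
      simpa using ((hasDerivAt_id (0 : ℂ)).smul_const (b i)).const_add (s i)
    have hprod :=
      τ.hasFDerivAt.comp_hasDerivAt 0 (HasDerivAt.list_prod (l := l) fun i _ ↦ hline i)
    simp only [zero_smul, add_zero, map_sum] at hprod
    rw [sum_tracial_mul_lift_cyclicDeriv_mono τ htr s b δ hδ l]
    simp only [lift_mono]
    exact hprod
  | zero => simpa using hasDerivAt_const (0 : ℂ) (0 : ℂ)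
  | add _ _ _ _ hx hy =>
    simpa only [map_add, mul_add, Finset.sum_add_distrib] using hx.fun_add hy
  | smul c _ _ hx =>
    simpa only [map_smul, mul_smul_comm, Finset.smul_sum] using hx.fun_const_smul c

/-- subsequently applying a continuous tracial functional `τ` on a complex
normed unital algebra `M`, the map `ε ↦ τ(ev_{s+εb}(P))` has derivative at `ε = 0` equal to
`Σ_j τ(b_j · ev_s(δ_j P))`, where `δ_j` is the `j`-th cyclic derivative. -/
theorem stmt5 {n : ℕ} (hn : 1 ≤ n)
    (M : Type*) [NormedRing M] [NormedAlgebra ℂ M]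
    (τ : M →L[ℂ] ℂ) (htr : ∀ x y : M, τ (x * y) = τ (y * x))
    (s b : Fin n → M)
    (δ : Fin n → (FA n →ₗ[ℂ] FA n))
    (hδ : ∀ (j : Fin n) (l : List (Fin n)),
      δ j (mono l) = ∑ k : Fin l.length,
        if l.get k = j then mono (l.drop (k.val + 1)) * mono (l.take k.val) else 0)
    (P : FA n) :
    HasDerivAt (fun ε : ℂ => τ (FreeAlgebra.lift ℂ (fun i => s i + ε • b i) P))
      (∑ j : Fin n, τ (b j * FreeAlgebra.lift ℂ s (δ j P))) 0 :=
  stmt5_general M τ htr s b δ hδ P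
end
end

section
/- (Lemma 1, main identity.) Let τ be a tracial functional on A and let a = (a_k), b = (b_k), c = (c_k) ∈ Aⁿ with a divergence-free for τ. Then Σ_{j=1}^n τ((D_a b_j)·c_j) − Σ_{j=1}^n τ((D_b a_j)·c_j) = −Σ_{k=1}^n τ((D_a c_k + Σ_{j=1}^n Θ_{k,c_j}(a_j))·b_k). -/
open scoped TensorProduct

noncomputable section

/-!
By traciality, the divergence-free condition tested on a monomial `m` reads `τ(D_a m) = 0`,
hence `τ ∘ D_a = 0`. Since `D_a` is a derivation, `τ(D_a(b_j c_j)) = 0` and traciality give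
`τ((D_a b_j) c_j) = -τ((D_a c_j) b_j)`. On the other side, cycling each term of
`τ((D_b a_j) c_j)` so that the inserted `b_k` comes last yields `Σ_k τ(Θ_{k,c_j}(a_j) b_k)`.
-/

open Submodule Set
open scoped Pointwise

namespace FA

variable {n : ℕ}

lemma mono_append (l₁ l₂ : List (Fin n)) : mono (l₁ ++ l₂) = mono l₁ * mono l₂ := by
  simp [mono]

lemma span_range_mono : span ℂ (range (mono (n := n))) = ⊤ := by
  rw [eq_top_iff]
  rintro x -
  induction x using FreeAlgebra.induction with
  | grade0 r =>
    rw [Algebra.algebraMap_eq_smul_one]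
    exact smul_mem _ _ (subset_span ⟨[], rfl⟩)
  | grade1 i => exact subset_span ⟨[i], by simp [mono, X]⟩
  | mul p q hp hq =>
    have hpq : p * q ∈ span ℂ (range mono * range mono) :=
      span_mul_span ℂ (range mono) (range mono) ▸ Submodule.mul_mem_mul hp hq
    refine span_le.2 ?_ hpq
    rintro _ ⟨_, ⟨l₁, rfl⟩, _, ⟨l₂, rfl⟩, rfl⟩
    exact subset_span ⟨l₁ ++ l₂, mono_append l₁ l₂⟩
  | add p q hp hq => exact add_mem hp hq

lemma mono_ext {M : Type*} [AddCommMonoid M] [Module ℂ M] {f g : FA n →ₗ[ℂ] M}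
    (h : ∀ l, f (mono l) = g (mono l)) : f = g :=
  LinearMap.ext_on_range span_range_mono h

section Derivation

variable {d : FA n →ₗ[ℂ] FA n} {b : Fin n → FA n}

lemma map_mono_append_of_derivation_formula
    (hd : ∀ l : List (Fin n), d (mono l) = ∑ k : Fin l.length,
      mono (l.take k.val) * b (l.get k) * mono (l.drop (k.val + 1)))
    (l₁ l₂ : List (Fin n)) :
    d (mono (l₁ ++ l₂)) = d (mono l₁) * mono l₂ + mono l₁ * d (mono l₂) := by
  have hlen : l₁.length + l₂.length = (l₁ ++ l₂).length := by simp
  rw [hd, hd, hd, ← Fin.sum_congr' _ hlen, Fin.sum_univ_add, Finset.sum_mul, Finset.mul_sum]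
  congr 1 <;> refine Finset.sum_congr rfl fun i _ => ?_
  · have htake : (l₁ ++ l₂).take i = l₁.take i := List.take_append_of_le_length i.isLt.le
    have hget : (l₁ ++ l₂)[i.val] = l₁[i.val] := List.getElem_append_left i.isLt
    have hdrop : (l₁ ++ l₂).drop (i + 1) = l₁.drop (i + 1) ++ l₂ :=
      List.drop_append_of_le_length i.isLt
    simp only [Fin.val_cast, Fin.val_castAdd, List.get_eq_getElem, htake, hget, hdrop,
      mono_append, mul_assoc]
  · have htake : (l₁ ++ l₂).take (l₁.length + i) = l₁ ++ l₂.take i :=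
      List.take_length_add_append i.val
    have hget : (l₁ ++ l₂)[l₁.length + i.val]'(by simp) = l₂[i.val] := by simp
    have hdrop : (l₁ ++ l₂).drop (l₁.length + i + 1) = l₂.drop (i + 1) := by
      rw [Nat.add_assoc]; exact List.drop_length_add_append (i.val + 1)
    simp only [Fin.val_cast, Fin.val_natAdd, List.get_eq_getElem, htake, hget, hdrop,
      mono_append, mul_assoc]

lemma map_mul_of_derivation_formula
    (hd : ∀ l : List (Fin n), d (mono l) = ∑ k : Fin l.length,
      mono (l.take k.val) * b (l.get k) * mono (l.drop (k.val + 1)))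
    (P Q : FA n) : d (P * Q) = d P * Q + P * d Q := by
  have h : (LinearMap.mul ℂ (FA n)).compr₂ d =
      (LinearMap.mul ℂ (FA n)).compl₁₂ d LinearMap.id + (LinearMap.mul ℂ (FA n)).compl₂ d :=
    mono_ext fun l₁ => mono_ext fun l₂ => by
      simpa [← mono_append] using map_mono_append_of_derivation_formula hd l₁ l₂
  simpa using LinearMap.congr_fun₂ h P Q

end Derivation

lemma trace_comp_eq_zero_of_divergenceFree (τ : FA n →ₗ[ℂ] ℂ)
    (htr : ∀ P Q : FA n, τ (P * Q) = τ (Q * P))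
    {δ : Fin n → FA n →ₗ[ℂ] FA n}
    (hδ : ∀ (j : Fin n) (l : List (Fin n)), δ j (mono l) = ∑ k : Fin l.length,
      if l.get k = j then mono (l.drop (k.val + 1)) * mono (l.take k.val) else 0)
    {d : FA n →ₗ[ℂ] FA n} {a : Fin n → FA n}
    (hd : ∀ l : List (Fin n), d (mono l) = ∑ k : Fin l.length,
      mono (l.take k.val) * a (l.get k) * mono (l.drop (k.val + 1)))
    (ha : ∀ R : FA n, ∑ j : Fin n, τ (a j * δ j R) = 0) :
    τ ∘ₗ d = 0 := by
  refine mono_ext fun l => ?_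
  have hl := ha (mono l)
  simp only [hδ, Finset.mul_sum, mul_ite, mul_zero, map_sum, apply_ite τ, map_zero] at hl
  rw [Finset.sum_comm] at hl
  simp only [Finset.sum_ite_eq, Finset.mem_univ, if_true] at hl
  rw [LinearMap.comp_apply, hd, map_sum, LinearMap.zero_apply, ← hl]
  exact Finset.sum_congr rfl fun k _ => by rw [mul_assoc, htr, mul_assoc]

lemma trace_derivation_mul_eq_sum_theta (τ : FA n →ₗ[ℂ] ℂ)
    (htr : ∀ P Q : FA n, τ (P * Q) = τ (Q * P))
    {d : FA n →ₗ[ℂ] FA n} {b : Fin n → FA n}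
    (hd : ∀ l : List (Fin n), d (mono l) = ∑ k : Fin l.length,
      mono (l.take k.val) * b (l.get k) * mono (l.drop (k.val + 1)))
    {θ : Fin n → FA n →ₗ[ℂ] FA n} {γ : FA n}
    (hθ : ∀ (k : Fin n) (l : List (Fin n)), θ k (mono l) = ∑ p : Fin l.length,
      if l.get p = k then mono (l.drop (p.val + 1)) * γ * mono (l.take p.val) else 0)
    (α : FA n) :
    τ (d α * γ) = ∑ k : Fin n, τ (θ k α * b k) := by
  have h : τ ∘ₗ (LinearMap.mulRight ℂ γ ∘ₗ d)
      = ∑ k : Fin n, τ ∘ₗ (LinearMap.mulRight ℂ (b k) ∘ₗ θ k) := by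
    refine mono_ext fun l => ?_
    simp only [LinearMap.sum_apply, LinearMap.comp_apply, LinearMap.mulRight_apply, hd, hθ,
      map_sum, ite_mul, zero_mul, apply_ite τ, map_zero]
    rw [Finset.sum_comm]
    simp only [Finset.sum_ite_eq, Finset.mem_univ, if_true]
    exact Finset.sum_congr rfl fun p _ => by
      rw [mul_assoc (mono _ * b _), htr, ← mul_assoc, mul_assoc]
  simpa using LinearMap.congr_fun h α

end FA

lemma trace_map_mul_eq_neg {R A : Type*} [CommRing R] [Ring A] [Module R A]
    (τ : A →ₗ[R] R) (htr : ∀ x y : A, τ (x * y) = τ (y * x))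
    {d : A →ₗ[R] A} (hd : ∀ x y : A, d (x * y) = d x * y + x * d y) (hτd : τ ∘ₗ d = 0)
    (x y : A) : τ (d x * y) = -τ (d y * x) := by
  have h := LinearMap.congr_fun hτd (x * y)
  rw [LinearMap.comp_apply, hd, map_add, htr x] at h
  simpa [eq_neg_iff_add_eq_zero] using h

theorem stmt17_general {n : ℕ}
    (τ : FA n →ₗ[ℂ] ℂ) (htr : ∀ P Q : FA n, τ (P * Q) = τ (Q * P))
    (δ : Fin n → (FA n →ₗ[ℂ] FA n))
    (hδ : ∀ (j : Fin n) (l : List (Fin n)),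
      δ j (mono l) = ∑ k : Fin l.length,
        if l.get k = j then mono (l.drop (k.val + 1)) * mono (l.take k.val) else 0)
    (D : (Fin n → FA n) → (FA n →ₗ[ℂ] FA n))
    (hD : ∀ (b : Fin n → FA n) (l : List (Fin n)),
      D b (mono l) = ∑ k : Fin l.length,
        mono (l.take k.val) * b (l.get k) * mono (l.drop (k.val + 1)))
    (Θ : Fin n → FA n → (FA n →ₗ[ℂ] FA n))
    (hΘ : ∀ (k : Fin n) (c : FA n) (l : List (Fin n)),
      Θ k c (mono l) = ∑ p : Fin l.length,
        if l.get p = k then mono (l.drop (p.val + 1)) * c * mono (l.take p.val) else 0)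
    (a b c : Fin n → FA n)
    (ha : ∀ R : FA n, ∑ j : Fin n, τ (a j * δ j R) = 0) :
    ∑ j : Fin n, τ (D a (b j) * c j) - ∑ j : Fin n, τ (D b (a j) * c j)
      = - ∑ k : Fin n, τ ((D a (c k) + ∑ j : Fin n, Θ k (c j) (a j)) * b k) := by
  have hDa_mul := FA.map_mul_of_derivation_formula (hD a)
  have hτDa := FA.trace_comp_eq_zero_of_divergenceFree τ htr hδ (hD a) ha
  have hswap (j : Fin n) : τ (D a (b j) * c j) = -τ (D a (c j) * b j) :=
    trace_map_mul_eq_neg τ htr hDa_mul hτDa _ _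
  have hcycle (j : Fin n) : τ (D b (a j) * c j) = ∑ k : Fin n, τ (Θ k (c j) (a j) * b k) :=
    FA.trace_derivation_mul_eq_sum_theta τ htr (hD b) (hΘ · (c j)) (a j)
  simp only [hswap, hcycle, add_mul, map_add, Finset.sum_mul, map_sum, Finset.sum_add_distrib,
    Finset.sum_neg_distrib]
  rw [Finset.sum_comm]
  ring

/-- Lemma 1, main identity: for a tracial functional `τ` and
`a, b, c ∈ Aⁿ` with `a` divergence-free for `τ`,
`Σ_j τ((D_a b_j)·c_j) − Σ_j τ((D_b a_j)·c_j)
   = −Σ_k τ((D_a c_k + Σ_j Θ_{k,c_j}(a_j))·b_k)`,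
where `Θ_{k,c} = m_c ∘ ∼ ∘ ∂_k`. -/
theorem stmt17 {n : ℕ} (hn : 1 ≤ n)
    (τ : FA n →ₗ[ℂ] ℂ) (htr : ∀ P Q : FA n, τ (P * Q) = τ (Q * P))
    (δ : Fin n → (FA n →ₗ[ℂ] FA n))
    (hδ : ∀ (j : Fin n) (l : List (Fin n)),
      δ j (mono l) = ∑ k : Fin l.length,
        if l.get k = j then mono (l.drop (k.val + 1)) * mono (l.take k.val) else 0)
    (D : (Fin n → FA n) → (FA n →ₗ[ℂ] FA n))
    (hD : ∀ (b : Fin n → FA n) (l : List (Fin n)),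
      D b (mono l) = ∑ k : Fin l.length,
        mono (l.take k.val) * b (l.get k) * mono (l.drop (k.val + 1)))
    (Θ : Fin n → FA n → (FA n →ₗ[ℂ] FA n))
    (hΘ : ∀ (k : Fin n) (c : FA n) (l : List (Fin n)),
      Θ k c (mono l) = ∑ p : Fin l.length,
        if l.get p = k then mono (l.drop (p.val + 1)) * c * mono (l.take p.val) else 0)
    (a b c : Fin n → FA n)
    (ha : ∀ R : FA n, ∑ j : Fin n, τ (a j * δ j R) = 0) :
    ∑ j : Fin n, τ (D a (b j) * c j) - ∑ j : Fin n, τ (D b (a j) * c j)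
      = - ∑ k : Fin n, τ ((D a (c k) + ∑ j : Fin n, Θ k (c j) (a j)) * b k) :=
  stmt17_general τ htr δ hδ D hD Θ hΘ a b c ha
end
end
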